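/- arXiv:1910.13031 — 2 statements merged into one kernel-verified Lean document; each statement's English description precedes it below -/
import Mathlib

section
/- (Theorem 1, part 1, nondegeneracy.) Let V be a subspace of the Euclidean space ℝ^{4n} such that 𝕀·V ⊆ V^⊥, 𝕁·V ⊆ V^⊥, 𝕀·V^⊥ ⊆ V, and 𝕁·V^⊥ ⊆ V. Then the restriction of the symplectic form ω_𝕂 to V is nondegenerate: for every nonzero u ∈ V there exists w ∈ V with ω_𝕂(u, w) ≠ 0 (indeed w = −𝕂u ∈ V works, since ω_𝕂(u, −𝕂u) = ⟨u, u⟩ > 0). -/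
open Matrix

/-- The standard 2n×2n symplectic matrix `J = [[0, I],[−I, 0]]`. -/
def Jstd (n : ℕ) : Matrix (Fin n ⊕ Fin n) (Fin n ⊕ Fin n) ℝ :=
  Matrix.fromBlocks 0 1 (-1) 0

/-- The 4n×4n matrix `𝕀 = [[0, −I_{2n}],[I_{2n}, 0]]`. -/
def bbI (n : ℕ) :
    Matrix ((Fin n ⊕ Fin n) ⊕ (Fin n ⊕ Fin n)) ((Fin n ⊕ Fin n) ⊕ (Fin n ⊕ Fin n)) ℝ :=
  Matrix.fromBlocks 0 (-1) 1 0

/-- The 4n×4n matrix `𝕁 = [[J, 0],[0, Jᵀ]]`. -/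
def bbJ (n : ℕ) :
    Matrix ((Fin n ⊕ Fin n) ⊕ (Fin n ⊕ Fin n)) ((Fin n ⊕ Fin n) ⊕ (Fin n ⊕ Fin n)) ℝ :=
  Matrix.fromBlocks (Jstd n) 0 0 (Jstd n)ᵀ

/-- The 4n×4n matrix `𝕂 = [[0, J],[J, 0]]`. -/
def bbK (n : ℕ) :
    Matrix ((Fin n ⊕ Fin n) ⊕ (Fin n ⊕ Fin n)) ((Fin n ⊕ Fin n) ⊕ (Fin n ⊕ Fin n)) ℝ :=
  Matrix.fromBlocks 0 (Jstd n) (Jstd n) 0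

open RealInnerProductSpace in
lemma Matrix.inner_toEuclideanLin_toEuclideanLin_self_of_mul_self_eq_neg_one
    {m : Type*} [Fintype m] [DecidableEq m] {A : Matrix m m ℝ} (hA : A * A = -1)
    (u : EuclideanSpace ℝ m) :
    ⟪u, toEuclideanLin A (toEuclideanLin A u)⟫ = -‖u‖ ^ 2 := by
  rw [← LinearMap.comp_apply, ← toLpLin_mul_same, hA, map_neg, toLpLin_one, LinearMap.neg_apply,
    LinearMap.id_apply, inner_neg_right, real_inner_self_eq_norm_sq]

lemma bbI_mul_bbJ (n : ℕ) : bbI n * bbJ n = bbK n := by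
  simp [bbI, bbJ, bbK, Jstd, fromBlocks_multiply, fromBlocks_transpose, fromBlocks_neg]

lemma bbK_mul_self (n : ℕ) : bbK n * bbK n = -1 := by
  simp [bbK, Jstd, fromBlocks_multiply, ← fromBlocks_one, fromBlocks_neg]

open RealInnerProductSpace in
theorem omega_K_nondegenerate_on_V_general (n : ℕ)
    (V : Submodule ℝ (EuclideanSpace ℝ ((Fin n ⊕ Fin n) ⊕ (Fin n ⊕ Fin n))))
    (hJ : V.map (Matrix.toEuclideanLin (bbJ n)) ≤ Vᗮ)
    (hI' : Vᗮ.map (Matrix.toEuclideanLin (bbI n)) ≤ V) :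
    ∀ u ∈ V, u ≠ 0 → ∃ w ∈ V, ⟪u, Matrix.toEuclideanLin (bbK n) w⟫ ≠ 0 := by
  intro u hu hu0
  have hJu : toEuclideanLin (bbJ n) u ∈ Vᗮ := hJ ⟨u, hu, rfl⟩
  have hKu : toEuclideanLin (bbK n) u ∈ V := by
    rw [← bbI_mul_bbJ, toLpLin_mul_same, LinearMap.comp_apply]
    exact hI' ⟨_, hJu, rfl⟩
  refine ⟨_, hKu, ?_⟩
  rw [inner_toEuclideanLin_toEuclideanLin_self_of_mul_self_eq_neg_one (bbK_mul_self n)]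
  exact neg_ne_zero.mpr (pow_ne_zero 2 (norm_ne_zero_iff.mpr hu0))

open RealInnerProductSpace in
/-- Theorem 1, part 1, nondegeneracy: under the same hypotheses,
the restriction of `ω_𝕂(u,v) = ⟨u, 𝕂 v⟩` to `V` is nondegenerate. -/
theorem omega_K_nondegenerate_on_V (n : ℕ) (hn : 1 ≤ n)
    (V : Submodule ℝ (EuclideanSpace ℝ ((Fin n ⊕ Fin n) ⊕ (Fin n ⊕ Fin n))))
    (hI : V.map (Matrix.toEuclideanLin (bbI n)) ≤ Vᗮ)
    (hJ : V.map (Matrix.toEuclideanLin (bbJ n)) ≤ Vᗮ)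
    (hI' : Vᗮ.map (Matrix.toEuclideanLin (bbI n)) ≤ V)
    (hJ' : Vᗮ.map (Matrix.toEuclideanLin (bbJ n)) ≤ V) :
    ∀ u ∈ V, u ≠ 0 → ∃ w ∈ V, ⟪u, Matrix.toEuclideanLin (bbK n) w⟫ ≠ 0 :=
  omega_K_nondegenerate_on_V_general n V hJ hI'
end

section
/- (Lemma 2.) Let S be a symmetric 2n×2n real matrix and let R be a Hamiltonian 2n×2n real matrix (RᵀJ + JR = 0). Then the 4n×4n block matrix A = [[R, S],[−J S J, −Rᵀ]] is Hamiltonian for both ω_𝕀 and ω_𝕁, i.e., Aᵀ𝕀 + 𝕀A = 0 and Aᵀ𝕁 + 𝕁A = 0. -/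
open Matrix

/-!
Both conditions are checked blockwise. For `𝕀` they say exactly that the two off-diagonal blocks
are symmetric, and `-(J S J)` is symmetric because `J` is skew. For `𝕁` the diagonal blocks must be
Hamiltonian for `J` and `Jᵀ = -J`; for `-Rᵀ` this follows by conjugating `RᵀJ + JR = 0` with `J`,
using `J⁻¹ = -J`. The off-diagonal conditions reduce to `J² = -1`.
-/

namespace Matrix

variable {m n α : Type*} [Fintype m] [Fintype n] [CommRing α]

def IsHamiltonian (C A : Matrix m m α) : Prop :=
  Aᵀ * C + C * A = 0

theorem isHamiltonian_neg_neg {C A : Matrix m m α} :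
    IsHamiltonian (-C) (-A) ↔ IsHamiltonian C A := by
  simp [IsHamiltonian]

theorem IsHamiltonian.transpose [DecidableEq m] {J R : Matrix m m α} (hJJ : J * J = -1)
    (hR : IsHamiltonian J R) : IsHamiltonian J Rᵀ := by
  have h := congrArg (J * · * J) hR
  simp only [add_mul, mul_add, Matrix.mul_zero, Matrix.zero_mul] at h
  rw [IsHamiltonian, transpose_transpose, ← neg_eq_zero, ← h]
  simp only [Matrix.mul_assoc, hJJ]
  simp only [← Matrix.mul_assoc, hJJ]
  noncomm_ring

theorem isHamiltonian_fromBlocks_diagonal_iff {C : Matrix m m α} {D : Matrix n n α}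
    {R : Matrix m m α} {S : Matrix m n α} {T : Matrix n m α} {U : Matrix n n α} :
    IsHamiltonian (fromBlocks C 0 0 D) (fromBlocks R S T U) ↔
      IsHamiltonian C R ∧ Tᵀ * D + C * S = 0 ∧ Sᵀ * C + D * T = 0 ∧ IsHamiltonian D U := by
  simp only [IsHamiltonian, fromBlocks_transpose, fromBlocks_multiply, fromBlocks_add,
    ← fromBlocks_zero, fromBlocks_inj]
  simp

theorem isHamiltonian_fromBlocks_antidiagonal_iff [DecidableEq m] {R S T : Matrix m m α} :
    IsHamiltonian (fromBlocks 0 (-1) 1 0) (fromBlocks R S T (-Rᵀ)) ↔ S.IsSymm ∧ T.IsSymm := by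
  simp only [IsHamiltonian, fromBlocks_transpose, fromBlocks_multiply, fromBlocks_add,
    ← fromBlocks_zero, fromBlocks_inj]
  simp [IsSymm, add_eq_zero_iff_eq_neg, and_comm]

theorem IsSymm.mul_mul_of_transpose_eq_neg {J S : Matrix m m α} (hJt : Jᵀ = -J)
    (hS : S.IsSymm) : (J * S * J).IsSymm := by
  simp [IsSymm, transpose_mul, hJt, hS.eq, Matrix.mul_assoc]

variable [DecidableEq m] {J R S : Matrix m m α}

theorem isHamiltonian_antidiagonal_fromBlocks_conj (hJt : Jᵀ = -J) (hS : S.IsSymm) :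
    IsHamiltonian (fromBlocks 0 (-1) 1 0) (fromBlocks R S (-(J * S * J)) (-Rᵀ)) :=
  isHamiltonian_fromBlocks_antidiagonal_iff.2 ⟨hS, (hS.mul_mul_of_transpose_eq_neg hJt).neg⟩

theorem isHamiltonian_diagonal_fromBlocks_conj (hJt : Jᵀ = -J) (hJJ : J * J = -1)
    (hS : S.IsSymm) (hR : IsHamiltonian J R) :
    IsHamiltonian (fromBlocks J 0 0 Jᵀ) (fromBlocks R S (-(J * S * J)) (-Rᵀ)) := by
  have hT : (-(J * S * J))ᵀ = -(J * S * J) := (hS.mul_mul_of_transpose_eq_neg hJt).neg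
  refine isHamiltonian_fromBlocks_diagonal_iff.2 ⟨hR, ?_, ?_, ?_⟩
  · rw [hT, hJt, neg_mul_neg, Matrix.mul_assoc, hJJ]
    noncomm_ring
  · rw [hS.eq, hJt, neg_mul_neg, ← Matrix.mul_assoc, ← Matrix.mul_assoc, hJJ]
    noncomm_ring
  · rw [hJt]
    exact isHamiltonian_neg_neg.2 (hR.transpose hJJ)

end Matrix

theorem Jstd_transpose (n : ℕ) : (Jstd n)ᵀ = -Jstd n := by
  simp [Jstd, fromBlocks_transpose, fromBlocks_neg]

theorem Jstd_mul_self (n : ℕ) : Jstd n * Jstd n = -1 := by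
  simp [Jstd, fromBlocks_multiply, ← fromBlocks_one, fromBlocks_neg]

theorem block_matrix_doubly_hamiltonian_general (n : ℕ)
    (S R : Matrix (Fin n ⊕ Fin n) (Fin n ⊕ Fin n) ℝ)
    (hS : Sᵀ = S) (hR : Rᵀ * Jstd n + Jstd n * R = 0) :
    (Matrix.fromBlocks R S (-(Jstd n * S * Jstd n)) (-Rᵀ))ᵀ * bbI n
        + bbI n * Matrix.fromBlocks R S (-(Jstd n * S * Jstd n)) (-Rᵀ) = 0 ∧
    (Matrix.fromBlocks R S (-(Jstd n * S * Jstd n)) (-Rᵀ))ᵀ * bbJ n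
        + bbJ n * Matrix.fromBlocks R S (-(Jstd n * S * Jstd n)) (-Rᵀ) = 0 :=
  ⟨isHamiltonian_antidiagonal_fromBlocks_conj (Jstd_transpose n) hS,
    isHamiltonian_diagonal_fromBlocks_conj (Jstd_transpose n) (Jstd_mul_self n) hS hR⟩

/-- Lemma 2: for `S` symmetric and `R` Hamiltonian, the block matrix
`A = [[R, S],[−JSJ, −Rᵀ]]` is Hamiltonian for both `ω_𝕀` and `ω_𝕁`. -/
theorem block_matrix_doubly_hamiltonian (n : ℕ) (hn : 1 ≤ n)
    (S R : Matrix (Fin n ⊕ Fin n) (Fin n ⊕ Fin n) ℝ)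
    (hS : Sᵀ = S) (hR : Rᵀ * Jstd n + Jstd n * R = 0) :
    (Matrix.fromBlocks R S (-(Jstd n * S * Jstd n)) (-Rᵀ))ᵀ * bbI n
        + bbI n * Matrix.fromBlocks R S (-(Jstd n * S * Jstd n)) (-Rᵀ) = 0 ∧
    (Matrix.fromBlocks R S (-(Jstd n * S * Jstd n)) (-Rᵀ))ᵀ * bbJ n
        + bbJ n * Matrix.fromBlocks R S (-(Jstd n * S * Jstd n)) (-Rᵀ) = 0 :=
  block_matrix_doubly_hamiltonian_general n S R hS hR
end
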